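/- arXiv:2111.07582 — 3 statements merged into one kernel-verified Lean document; each statement's English description precedes it below -/
import Mathlib

section
/- Let φ, v, w : ℝ³ → ℝ be smooth, set t = (cos φ, sin φ), n = (−sin φ, cos φ), q = v·t + w·n, κ = D_s φ and θ = D_n φ. Then the pair of governing equations '∂_τ t + (q·∇)t = (t·∇)q and div q = 0 (spatial divergence)' holds everywhere if and only if the three equations D_s w = ∂_τ φ + θ·w, D_n w = −θ·v and D_s v = κ·w hold everywhere. -/
noncomputable section

def px (f : ℝ × ℝ × ℝ → ℝ) (p : ℝ × ℝ × ℝ) : ℝ := fderiv ℝ f p (1, 0, 0)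
def py (f : ℝ × ℝ × ℝ → ℝ) (p : ℝ × ℝ × ℝ) : ℝ := fderiv ℝ f p (0, 1, 0)
def pt (f : ℝ × ℝ × ℝ → ℝ) (p : ℝ × ℝ × ℝ) : ℝ := fderiv ℝ f p (0, 0, 1)

def Ds (φ f : ℝ × ℝ × ℝ → ℝ) (p : ℝ × ℝ × ℝ) : ℝ :=
  Real.cos (φ p) * px f p + Real.sin (φ p) * py f p

def Dn (φ f : ℝ × ℝ × ℝ → ℝ) (p : ℝ × ℝ × ℝ) : ℝ :=
  -Real.sin (φ p) * px f p + Real.cos (φ p) * py f p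

lemma fd_cos (φ : ℝ × ℝ × ℝ → ℝ) (hφ : ContDiff ℝ (⊤ : ℕ∞) φ) (p u : ℝ × ℝ × ℝ) :
    fderiv ℝ (fun p => Real.cos (φ p)) p u = -Real.sin (φ p) * fderiv ℝ φ p u := by
  have h := (Real.hasDerivAt_cos (φ p)).comp_hasFDerivAt p
    (hφ.differentiable (by simp) p).hasFDerivAt
  simp only [Function.comp_def] at h
  rw [h.fderiv]
  simp

lemma fd_sin (φ : ℝ × ℝ × ℝ → ℝ) (hφ : ContDiff ℝ (⊤ : ℕ∞) φ) (p u : ℝ × ℝ × ℝ) :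
    fderiv ℝ (fun p => Real.sin (φ p)) p u = Real.cos (φ p) * fderiv ℝ φ p u := by
  have h := (Real.hasDerivAt_sin (φ p)).comp_hasFDerivAt p
    (hφ.differentiable (by simp) p).hasFDerivAt
  simp only [Function.comp_def] at h
  rw [h.fderiv]
  simp

lemma fd_q1 (φ v w : ℝ × ℝ × ℝ → ℝ) (hφ : ContDiff ℝ (⊤ : ℕ∞) φ) (hv : ContDiff ℝ (⊤ : ℕ∞) v)
    (hw : ContDiff ℝ (⊤ : ℕ∞) w) (p u : ℝ × ℝ × ℝ) :
    fderiv ℝ (fun p => v p * Real.cos (φ p) - w p * Real.sin (φ p)) p u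
      = (fderiv ℝ v p u * Real.cos (φ p) + v p * (-Real.sin (φ p) * fderiv ℝ φ p u))
        - (fderiv ℝ w p u * Real.sin (φ p) + w p * (Real.cos (φ p) * fderiv ℝ φ p u)) := by
  have hφd := (hφ.differentiable (by simp) p).hasFDerivAt
  have h1 := (hv.differentiable (by simp) p).hasFDerivAt.mul
    ((Real.hasDerivAt_cos (φ p)).comp_hasFDerivAt p hφd)
  have h2 := (hw.differentiable (by simp) p).hasFDerivAt.mul
    ((Real.hasDerivAt_sin (φ p)).comp_hasFDerivAt p hφd)
  simp only [Function.comp_def] at h1 h2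
  rw [show (fun p => v p * Real.cos (φ p) - w p * Real.sin (φ p)) = ((v * fun x => Real.cos (φ x)) - w * fun x => Real.sin (φ x)) from rfl, (h1.sub h2).fderiv]
  simp
  ring

lemma fd_q2 (φ v w : ℝ × ℝ × ℝ → ℝ) (hφ : ContDiff ℝ (⊤ : ℕ∞) φ) (hv : ContDiff ℝ (⊤ : ℕ∞) v)
    (hw : ContDiff ℝ (⊤ : ℕ∞) w) (p u : ℝ × ℝ × ℝ) :
    fderiv ℝ (fun p => v p * Real.sin (φ p) + w p * Real.cos (φ p)) p u
      = (fderiv ℝ v p u * Real.sin (φ p) + v p * (Real.cos (φ p) * fderiv ℝ φ p u))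
        + (fderiv ℝ w p u * Real.cos (φ p) + w p * (-Real.sin (φ p) * fderiv ℝ φ p u)) := by
  have hφd := (hφ.differentiable (by simp) p).hasFDerivAt
  have h1 := (hv.differentiable (by simp) p).hasFDerivAt.mul
    ((Real.hasDerivAt_sin (φ p)).comp_hasFDerivAt p hφd)
  have h2 := (hw.differentiable (by simp) p).hasFDerivAt.mul
    ((Real.hasDerivAt_cos (φ p)).comp_hasFDerivAt p hφd)
  simp only [Function.comp_def] at h1 h2
  rw [show (fun p => v p * Real.sin (φ p) + w p * Real.cos (φ p)) = ((v * fun x => Real.sin (φ x)) + w * fun x => Real.cos (φ x)) from rfl, (h1.add h2).fderiv]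
  simp
  ring

theorem governing_iff_key_system (φ v w : ℝ × ℝ × ℝ → ℝ)
    (hφ : ContDiff ℝ (⊤ : ℕ∞) φ) (hv : ContDiff ℝ (⊤ : ℕ∞) v) (hw : ContDiff ℝ (⊤ : ℕ∞) w) :
    (∀ p,
      (pt (fun p => Real.cos (φ p)) p
        + ((fun p => v p * Real.cos (φ p) - w p * Real.sin (φ p)) p
            * px (fun p => Real.cos (φ p)) p
          + (fun p => v p * Real.sin (φ p) + w p * Real.cos (φ p)) p
            * py (fun p => Real.cos (φ p)) p)
        = Real.cos (φ p)
            * px (fun p => v p * Real.cos (φ p) - w p * Real.sin (φ p)) p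
          + Real.sin (φ p)
            * py (fun p => v p * Real.cos (φ p) - w p * Real.sin (φ p)) p)
      ∧ (pt (fun p => Real.sin (φ p)) p
        + ((fun p => v p * Real.cos (φ p) - w p * Real.sin (φ p)) p
            * px (fun p => Real.sin (φ p)) p
          + (fun p => v p * Real.sin (φ p) + w p * Real.cos (φ p)) p
            * py (fun p => Real.sin (φ p)) p)
        = Real.cos (φ p)
            * px (fun p => v p * Real.sin (φ p) + w p * Real.cos (φ p)) p
          + Real.sin (φ p)
            * py (fun p => v p * Real.sin (φ p) + w p * Real.cos (φ p)) p)
      ∧ (px (fun p => v p * Real.cos (φ p) - w p * Real.sin (φ p)) p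
        + py (fun p => v p * Real.sin (φ p) + w p * Real.cos (φ p)) p = 0))
    ↔ (∀ p, Ds φ w p = pt φ p + Dn φ φ p * w p
        ∧ Dn φ w p = -(Dn φ φ p * v p)
        ∧ Ds φ v p = Ds φ φ p * w p) := by
  apply forall_congr'
  intro p
  simp only [px, py, pt, Ds, Dn,
    fd_cos φ hφ, fd_sin φ hφ, fd_q1 φ v w hφ hv hw, fd_q2 φ v w hφ hv hw]
  set c := Real.cos (φ p) with hc
  set s := Real.sin (φ p) with hs
  set fx := fderiv ℝ φ p (1, 0, 0)
  set fy := fderiv ℝ φ p (0, 1, 0)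
  set ft := fderiv ℝ φ p (0, 0, 1)
  set vx := fderiv ℝ v p (1, 0, 0)
  set vy := fderiv ℝ v p (0, 1, 0)
  set wx := fderiv ℝ w p (1, 0, 0)
  set wy := fderiv ℝ w p (0, 1, 0)
  have htrig : s ^ 2 + c ^ 2 = 1 := Real.sin_sq_add_cos_sq (φ p)
  constructor
  · rintro ⟨h1, h2, h3⟩
    refine ⟨?_, ?_, ?_⟩
    · linear_combination s * h1 - c * h2
        - ((c * wx + s * wy) - ft - (-s * fx + c * fy) * w p) * htrig
    · linear_combination h3 + c * h1 + s * h2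
        + ((c * vx + s * vy) - (c * fx + s * fy) * w p) * htrig
    · linear_combination (-c) * h1 - s * h2
        - ((c * vx + s * vy) - (c * fx + s * fy) * w p) * htrig
  · rintro ⟨h1, h2, h3⟩
    refine ⟨?_, ?_, ?_⟩
    · linear_combination s * h1 - c * h3
    · linear_combination (-c) * h1 - s * h3
    · linear_combination h3 + h2
end
end

section
/- Let φ, v, w : ℝ³ → ℝ be smooth with κ = D_s φ and θ = D_n φ, and suppose the three equations D_s w = ∂_τ φ + θ·w, D_n w = −θ·v and D_s v = κ·w hold everywhere. Then the fibre divergence θ is convected with the flow: ∂_τ θ + v·(D_s θ) + w·(D_n θ) = 0 everywhere. -/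
noncomputable section

abbrev E3 := ℝ × ℝ × ℝ

lemma contDiff_pd {f : E3 → ℝ} (hf : ContDiff ℝ (⊤ : ℕ∞) f) (b : E3) :
    ContDiff ℝ (⊤ : ℕ∞) (fun q => fderiv ℝ f q b) :=
  (ContinuousLinearMap.apply ℝ ℝ b).contDiff.comp (hf.fderiv_right (by simp))

lemma hasFDerivAt_pd {f : E3 → ℝ} (hf : ContDiff ℝ (⊤ : ℕ∞) f) (b p : E3) :
    HasFDerivAt (fun q => fderiv ℝ f q b)
      ((ContinuousLinearMap.apply ℝ ℝ b).comp (fderiv ℝ (fderiv ℝ f) p)) p :=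
  (ContinuousLinearMap.apply ℝ ℝ b).hasFDerivAt.comp p
    (((hf.fderiv_right (m := 1) (by exact WithTop.coe_le_coe.mpr le_top)).differentiable one_ne_zero p).hasFDerivAt)

lemma second_symm {f : E3 → ℝ} (hf : ContDiff ℝ (⊤ : ℕ∞) f) (p a b : E3) :
    fderiv ℝ (fderiv ℝ f) p a b = fderiv ℝ (fderiv ℝ f) p b a :=
  second_derivative_symmetric (fun y => (hf.differentiable (by simp) y).hasFDerivAt)
    (((hf.fderiv_right (m := 1) (by exact WithTop.coe_le_coe.mpr le_top)).differentiable one_ne_zero p).hasFDerivAt) a b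

lemma contDiff_Ds {φ f : E3 → ℝ} (hφ : ContDiff ℝ (⊤ : ℕ∞) φ) (hf : ContDiff ℝ (⊤ : ℕ∞) f) :
    ContDiff ℝ (⊤ : ℕ∞) (Ds φ f) := by
  unfold Ds px py
  exact ((Real.contDiff_cos.comp hφ).mul (contDiff_pd hf _)).add
    ((Real.contDiff_sin.comp hφ).mul (contDiff_pd hf _))

lemma contDiff_Dn {φ f : E3 → ℝ} (hφ : ContDiff ℝ (⊤ : ℕ∞) φ) (hf : ContDiff ℝ (⊤ : ℕ∞) f) :
    ContDiff ℝ (⊤ : ℕ∞) (Dn φ f) := by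
  unfold Dn px py
  exact (((Real.contDiff_sin.comp hφ).neg).mul (contDiff_pd hf _)).add
    ((Real.contDiff_cos.comp hφ).mul (contDiff_pd hf _))

lemma fderiv_Ds {φ f : E3 → ℝ} (hφ : ContDiff ℝ (⊤ : ℕ∞) φ) (hf : ContDiff ℝ (⊤ : ℕ∞) f) (p u : E3) :
    fderiv ℝ (Ds φ f) p u =
      -Real.sin (φ p) * fderiv ℝ φ p u * fderiv ℝ f p (1,0,0)
      + Real.cos (φ p) * fderiv ℝ (fderiv ℝ f) p u (1,0,0)
      + Real.cos (φ p) * fderiv ℝ φ p u * fderiv ℝ f p (0,1,0)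
      + Real.sin (φ p) * fderiv ℝ (fderiv ℝ f) p u (0,1,0) := by
  have hφp := (hφ.differentiable (by simp) p).hasFDerivAt
  have H : HasFDerivAt (Ds φ f) _ p :=
    (hφp.cos.mul (hasFDerivAt_pd hf (1,0,0) p)).add (hφp.sin.mul (hasFDerivAt_pd hf (0,1,0) p))
  rw [H.fderiv]
  simp [px, py, ContinuousLinearMap.add_apply, ContinuousLinearMap.smul_apply,
    ContinuousLinearMap.comp_apply, ContinuousLinearMap.apply_apply, smul_eq_mul]
  ring

lemma fderiv_Dn {φ f : E3 → ℝ} (hφ : ContDiff ℝ (⊤ : ℕ∞) φ) (hf : ContDiff ℝ (⊤ : ℕ∞) f) (p u : E3) :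
    fderiv ℝ (Dn φ f) p u =
      -(Real.cos (φ p) * fderiv ℝ φ p u) * fderiv ℝ f p (1,0,0)
      - Real.sin (φ p) * fderiv ℝ (fderiv ℝ f) p u (1,0,0)
      - Real.sin (φ p) * fderiv ℝ φ p u * fderiv ℝ f p (0,1,0)
      + Real.cos (φ p) * fderiv ℝ (fderiv ℝ f) p u (0,1,0) := by
  have hφp := (hφ.differentiable (by simp) p).hasFDerivAt
  have H : HasFDerivAt (Dn φ f) _ p :=
    ((hφp.sin.neg).mul (hasFDerivAt_pd hf (1,0,0) p)).add (hφp.cos.mul (hasFDerivAt_pd hf (0,1,0) p))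
  rw [H.fderiv]
  simp [px, py, ContinuousLinearMap.add_apply, ContinuousLinearMap.smul_apply,
    ContinuousLinearMap.comp_apply, ContinuousLinearMap.apply_apply, smul_eq_mul]
  ring

theorem theta_convected (φ v w : ℝ × ℝ × ℝ → ℝ)
    (hφ : ContDiff ℝ (⊤ : ℕ∞) φ) (hv : ContDiff ℝ (⊤ : ℕ∞) v) (hw : ContDiff ℝ (⊤ : ℕ∞) w)
    (h1 : ∀ p, Ds φ w p = pt φ p + Dn φ φ p * w p)
    (h2 : ∀ p, Dn φ w p = -(Dn φ φ p * v p))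
    (h3 : ∀ p, Ds φ v p = Ds φ φ p * w p) :
    ∀ p, pt (Dn φ φ) p + v p * Ds φ (Dn φ φ) p + w p * Dn φ (Dn φ φ) p = 0 := by
  intro p
  have hvp := (hv.differentiable (by simp) p).hasFDerivAt
  have hwp := (hw.differentiable (by simp) p).hasFDerivAt
  have hDnφ : HasFDerivAt (Dn φ φ) (fderiv ℝ (Dn φ φ) p) p :=
    (((contDiff_Dn hφ hφ).differentiable (by simp)) p).hasFDerivAt
  have hDsφ : HasFDerivAt (Ds φ φ) (fderiv ℝ (Ds φ φ) p) p :=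
    (((contDiff_Ds hφ hφ).differentiable (by simp)) p).hasFDerivAt
  have e1 : Ds φ w = fun q => pt φ q + Dn φ φ q * w q := funext h1
  have e2 : Dn φ w = fun q => -(Dn φ φ q * v q) := funext h2
  -- differentiated hypothesis 1
  have H1 : ∀ u : E3, fderiv ℝ (Ds φ w) p u =
      fderiv ℝ (fderiv ℝ φ) p u (0,0,1)
      + (Dn φ φ p * fderiv ℝ w p u + w p * fderiv ℝ (Dn φ φ) p u) := by
    intro u
    have R1 : HasFDerivAt (fun q => pt φ q + Dn φ φ q * w q)
        (((ContinuousLinearMap.apply ℝ ℝ ((0:ℝ),(0:ℝ),(1:ℝ))).comp (fderiv ℝ (fderiv ℝ φ) p))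
          + (Dn φ φ p • fderiv ℝ w p + w p • fderiv ℝ (Dn φ φ) p)) p :=
      (hasFDerivAt_pd hφ (0,0,1) p).add (hDnφ.mul hwp)
    rw [e1, R1.fderiv]
    simp [ContinuousLinearMap.add_apply, ContinuousLinearMap.smul_apply,
      ContinuousLinearMap.comp_apply, ContinuousLinearMap.apply_apply, smul_eq_mul]
  -- differentiated hypothesis 2
  have H2 : ∀ u : E3, fderiv ℝ (Dn φ w) p u =
      -(Dn φ φ p * fderiv ℝ v p u + v p * fderiv ℝ (Dn φ φ) p u) := by
    intro u
    have R2 : HasFDerivAt (fun q => -(Dn φ φ q * v q))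
        (-(Dn φ φ p • fderiv ℝ v p + v p • fderiv ℝ (Dn φ φ) p)) p := (hDnφ.mul hvp).neg
    rw [e2, R2.fderiv]
    simp [ContinuousLinearMap.add_apply, ContinuousLinearMap.smul_apply, smul_eq_mul]
  have A1x := H1 (1,0,0)
  have A1y := H1 (0,1,0)
  have A2x := H2 (1,0,0)
  have A2y := H2 (0,1,0)
  rw [fderiv_Ds hφ hw, fderiv_Dn hφ hφ] at A1x A1y
  rw [fderiv_Dn hφ hw, fderiv_Dn hφ hφ] at A2x A2y
  simp only [Dn, px, py] at A1x A1y A2x A2y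
  have P1 := h1 p
  have P3 := h3 p
  simp only [Ds, Dn, px, py, pt] at P1 P3
  -- expand the goal
  simp only [pt, Ds, Dn, px, py]
  rw [fderiv_Dn hφ hφ p ((0:ℝ),(0:ℝ),(1:ℝ)), fderiv_Dn hφ hφ p ((1:ℝ),(0:ℝ),(0:ℝ)),
    fderiv_Dn hφ hφ p ((0:ℝ),(1:ℝ),(0:ℝ))]
  -- symmetry of second derivatives
  have sφyx := second_symm hφ p ((0:ℝ),(1:ℝ),(0:ℝ)) ((1:ℝ),(0:ℝ),(0:ℝ))
  have sφtx := second_symm hφ p ((0:ℝ),(0:ℝ),(1:ℝ)) ((1:ℝ),(0:ℝ),(0:ℝ))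
  have sφty := second_symm hφ p ((0:ℝ),(0:ℝ),(1:ℝ)) ((0:ℝ),(1:ℝ),(0:ℝ))
  have swyx := second_symm hw p ((0:ℝ),(1:ℝ),(0:ℝ)) ((1:ℝ),(0:ℝ),(0:ℝ))
  rw [sφtx, sφty]
  linear_combination
    (Real.cos (φ p)^2 + Real.sin (φ p)^2) * swyx +
    (Real.cos (φ p) * fderiv ℝ φ p (1,0,0) + Real.sin (φ p) * fderiv ℝ φ p (0,1,0)) * P1
    - (-Real.sin (φ p) * fderiv ℝ φ p (1,0,0) + Real.cos (φ p) * fderiv ℝ φ p (0,1,0)) * P3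
    + Real.sin (φ p) * A1x - Real.cos (φ p) * A1y
    + Real.cos (φ p) * A2x + Real.sin (φ p) * A2y


end
end

section
/- Let φ, ρ, α : ℝ³ → ℝ be smooth with κ = D_s φ and θ = D_n φ, and let M : ℝ² → ℝ be smooth. Suppose D_s ρ = 1 and D_s α = 0 everywhere, D_n α(p) = M(ρ(p), α(p)) for all p, and M(ρ(p), α(p)) ≠ 0 for all p. Define w = −(∂_τ α)/(D_n α) and v = −w·(D_n ρ) − ∂_τ ρ. Then all three kinematic equations hold everywhere: D_s w = ∂_τ φ + θ·w, D_n w = −θ·v and D_s v = κ·w. -/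
noncomputable section

private lemma contDiff_dapp {f : ℝ × ℝ × ℝ → ℝ} (hf : ContDiff ℝ (⊤ : ℕ∞) f) (u : ℝ × ℝ × ℝ) :
    ContDiff ℝ (⊤ : ℕ∞) (fun p => fderiv ℝ f p u) :=
  (ContinuousLinearMap.apply ℝ ℝ u).contDiff.comp (hf.fderiv_right (by simp))

private lemma second_symm_s12 {f : ℝ × ℝ × ℝ → ℝ} (hf : ContDiff ℝ (⊤ : ℕ∞) f) (p u v : ℝ × ℝ × ℝ) :
    fderiv ℝ (fun q => fderiv ℝ f q u) p v = fderiv ℝ (fun q => fderiv ℝ f q v) p u := by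
  have hd : ∀ y, HasFDerivAt f (fderiv ℝ f y) y := fun y =>
    (hf.differentiable (by simp) y).hasFDerivAt
  have hd2 : HasFDerivAt (fderiv ℝ f) (fderiv ℝ (fderiv ℝ f) p) p :=
    (((hf.fderiv_right (m := (⊤ : ℕ∞)) (by simp)).differentiable (by simp)) p).hasFDerivAt
  have e1 : fderiv ℝ (fun q => fderiv ℝ f q u) p =
      (ContinuousLinearMap.apply ℝ ℝ u).comp (fderiv ℝ (fderiv ℝ f) p) :=
    (((ContinuousLinearMap.apply ℝ ℝ u).hasFDerivAt).comp p hd2).fderiv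
  have e2 : fderiv ℝ (fun q => fderiv ℝ f q v) p =
      (ContinuousLinearMap.apply ℝ ℝ v).comp (fderiv ℝ (fderiv ℝ f) p) :=
    (((ContinuousLinearMap.apply ℝ ℝ v).hasFDerivAt).comp p hd2).fderiv
  rw [e1, e2]
  simpa using second_derivative_symmetric hd hd2 v u

private lemma fDs {φ f : ℝ × ℝ × ℝ → ℝ} (hφ : ContDiff ℝ (⊤ : ℕ∞) φ) (hf : ContDiff ℝ (⊤ : ℕ∞) f)
    (p u : ℝ × ℝ × ℝ) :
    fderiv ℝ (fun q => Real.cos (φ q) * fderiv ℝ f q (1,0,0)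
        + Real.sin (φ q) * fderiv ℝ f q (0,1,0)) p u
      = Real.cos (φ p) * fderiv ℝ (fun q => fderiv ℝ f q (1,0,0)) p u
        + Real.sin (φ p) * fderiv ℝ (fun q => fderiv ℝ f q (0,1,0)) p u
        + fderiv ℝ φ p u * (-Real.sin (φ p) * fderiv ℝ f p (1,0,0)
            + Real.cos (φ p) * fderiv ℝ f p (0,1,0)) := by
  have hφ' := (hφ.differentiable (by simp) p).hasFDerivAt
  have hx := ((contDiff_dapp hf (1,0,0)).differentiable (by simp) p).hasFDerivAt
  have hy := ((contDiff_dapp hf (0,1,0)).differentiable (by simp) p).hasFDerivAt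
  have H : HasFDerivAt (fun q => Real.cos (φ q) * fderiv ℝ f q (1,0,0)
      + Real.sin (φ q) * fderiv ℝ f q (0,1,0)) _ p := (hφ'.cos.mul hx).add (hφ'.sin.mul hy)
  rw [H.fderiv]
  simp only [ContinuousLinearMap.add_apply, ContinuousLinearMap.smul_apply, smul_eq_mul,
    ContinuousLinearMap.neg_apply]
  ring

private lemma fDn {φ f : ℝ × ℝ × ℝ → ℝ} (hφ : ContDiff ℝ (⊤ : ℕ∞) φ) (hf : ContDiff ℝ (⊤ : ℕ∞) f)
    (p u : ℝ × ℝ × ℝ) :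
    fderiv ℝ (fun q => -Real.sin (φ q) * fderiv ℝ f q (1,0,0)
        + Real.cos (φ q) * fderiv ℝ f q (0,1,0)) p u
      = -Real.sin (φ p) * fderiv ℝ (fun q => fderiv ℝ f q (1,0,0)) p u
        + Real.cos (φ p) * fderiv ℝ (fun q => fderiv ℝ f q (0,1,0)) p u
        - fderiv ℝ φ p u * (Real.cos (φ p) * fderiv ℝ f p (1,0,0)
            + Real.sin (φ p) * fderiv ℝ f p (0,1,0)) := by
  have hφ' := (hφ.differentiable (by simp) p).hasFDerivAt
  have hx := ((contDiff_dapp hf (1,0,0)).differentiable (by simp) p).hasFDerivAt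
  have hy := ((contDiff_dapp hf (0,1,0)).differentiable (by simp) p).hasFDerivAt
  have H : HasFDerivAt (fun q => -Real.sin (φ q) * fderiv ℝ f q (1,0,0)
      + Real.cos (φ q) * fderiv ℝ f q (0,1,0)) _ p := ((hφ'.sin.neg).mul hx).add (hφ'.cos.mul hy)
  rw [H.fderiv]
  simp only [ContinuousLinearMap.add_apply, ContinuousLinearMap.smul_apply, smul_eq_mul,
    ContinuousLinearMap.neg_apply, Pi.neg_apply]
  ring

private lemma fMcomp {ρ α : ℝ × ℝ × ℝ → ℝ} {M : ℝ × ℝ → ℝ} (hM : ContDiff ℝ (⊤ : ℕ∞) M)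
    (hρ : ContDiff ℝ (⊤ : ℕ∞) ρ) (hα : ContDiff ℝ (⊤ : ℕ∞) α) (p u : ℝ × ℝ × ℝ) :
    fderiv ℝ (fun q => M (ρ q, α q)) p u
      = fderiv ℝ M (ρ p, α p) (1,0) * fderiv ℝ ρ p u
        + fderiv ℝ M (ρ p, α p) (0,1) * fderiv ℝ α p u := by
  have h1 : HasFDerivAt (fun q => (ρ q, α q)) ((fderiv ℝ ρ p).prod (fderiv ℝ α p)) p :=
    HasFDerivAt.prodMk ((hρ.differentiable (by simp) p).hasFDerivAt) ((hα.differentiable (by simp) p).hasFDerivAt)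
  have h2 := (hM.differentiable (by simp) (ρ p, α p)).hasFDerivAt
  have h3 := (h2.comp p h1).fderiv
  rw [show (fun q => M (ρ q, α q)) = M ∘ (fun q => (ρ q, α q)) from rfl, h3]
  simp only [ContinuousLinearMap.coe_comp', Function.comp_apply, ContinuousLinearMap.prod_apply]
  have : (fderiv ℝ ρ p u, fderiv ℝ α p u)
      = fderiv ℝ ρ p u • ((1:ℝ),(0:ℝ)) + fderiv ℝ α p u • ((0:ℝ),(1:ℝ)) := by
    simp [Prod.ext_iff]
  rw [this, map_add, map_smul, map_smul, smul_eq_mul, smul_eq_mul]; ring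

private lemma key (c s fx fy ft rx ry rt ax ay at_ Mv Mx My rxx rxy ryy rtx rty
    axx axy ayy atx aty W wx wy V vx vy : ℝ)
    (hMv : Mv ≠ 0)
    (C1 : c*rx + s*ry = 1) (C2 : c*ax + s*ay = 0) (C3 : -s*ax + c*ay = Mv)
    (Rx : c*rxx + s*rxy = -(fx*(-s*rx + c*ry)))
    (Ry : c*rxy + s*ryy = -(fy*(-s*rx + c*ry)))
    (Rt : c*rtx + s*rty = -(ft*(-s*rx + c*ry)))
    (Ax : c*axx + s*axy = -(fx*Mv)) (Ay : c*axy + s*ayy = -(fy*Mv)) (At : c*atx + s*aty = -(ft*Mv))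
    (Nx : -s*axx + c*axy = Mx*rx + My*ax) (Ny : -s*axy + c*ayy = Mx*ry + My*ay)
    (Nt : -s*atx + c*aty = Mx*rt + My*at_)
    (hw : Mv * W = -at_)
    (hwx : Mv^2 * wx = at_*(Mx*rx + My*ax) - Mv*atx)
    (hwy : Mv^2 * wy = at_*(Mx*ry + My*ay) - Mv*aty)
    (hv : V = -(W*(-s*rx + c*ry)) - rt)
    (hvx : vx = -(wx*(-s*rx + c*ry) + W*(-s*rxx + c*rxy - fx*(c*rx + s*ry))) - rtx)
    (hvy : vy = -(wy*(-s*rx + c*ry) + W*(-s*rxy + c*ryy - fy*(c*rx + s*ry))) - rty) :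
    (c*wx + s*wy = ft + (-s*fx + c*fy)*W)
      ∧ (-s*wx + c*wy = -((-s*fx + c*fy)*V))
      ∧ (c*vx + s*vy = (c*fx + s*fy)*W) := by
  have hMx : Mx = (s*fx - c*fy)*Mv := by
    linear_combination (-s)*Ax + c*Ay + (-c)*Nx + (-s)*Ny + (-Mx)*C1 + (-My)*C2
  have hG1 : c*wx + s*wy = ft + (-s*fx + c*fy)*W :=
    mul_left_cancel₀ (pow_ne_zero 2 hMv) (by
      linear_combination c*hwx + s*hwy + (at_*Mx)*C1 + (at_*My)*C2 + (-Mv)*At + at_*hMx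
        + (-(-s*fx + c*fy)*Mv)*hw)
  refine ⟨hG1, ?_, ?_⟩
  · exact mul_left_cancel₀ (pow_ne_zero 2 hMv) (by
      linear_combination (-s)*hwx + c*hwy + (at_*My)*C3 + (-Mv)*Nt + (Mx*(-s*rx + c*ry))*hw
        + (-(Mx*Mv))*hv + (Mv*V)*hMx)
  · linear_combination c*hvx + s*hvy + (-(-s*rx + c*ry))*hG1 + (s*W)*Rx + (-(c*W))*Ry + (-1)*Rt
      + (c*W*fx)*C1 + (s*W*fy)*C1

theorem summary_all_three_equations (φ ρ α : ℝ × ℝ × ℝ → ℝ) (M : ℝ × ℝ → ℝ)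
    (hφ : ContDiff ℝ (⊤ : ℕ∞) φ) (hρ : ContDiff ℝ (⊤ : ℕ∞) ρ) (hα : ContDiff ℝ (⊤ : ℕ∞) α)
    (hM : ContDiff ℝ (⊤ : ℕ∞) M)
    (hρs : ∀ p, Ds φ ρ p = 1)
    (hαs : ∀ p, Ds φ α p = 0)
    (hαn : ∀ p, Dn φ α p = M (ρ p, α p))
    (hMne : ∀ p, M (ρ p, α p) ≠ 0)
    (w : ℝ × ℝ × ℝ → ℝ) (hwdef : w = fun p => -(pt α p / Dn φ α p))
    (v : ℝ × ℝ × ℝ → ℝ) (hvdef : v = fun p => -(w p * Dn φ ρ p) - pt ρ p) :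
    ∀ p, Ds φ w p = pt φ p + Dn φ φ p * w p
      ∧ Dn φ w p = -(Dn φ φ p * v p)
      ∧ Ds φ v p = Ds φ φ p * w p := by
  intro p
  -- differentiability of first partials
  have dXρ := (contDiff_dapp hρ ((1:ℝ),(0:ℝ),(0:ℝ))).differentiable (by simp)
  have dYρ := (contDiff_dapp hρ ((0:ℝ),(1:ℝ),(0:ℝ))).differentiable (by simp)
  have dTρ := (contDiff_dapp hρ ((0:ℝ),(0:ℝ),(1:ℝ))).differentiable (by simp)
  have dTα := (contDiff_dapp hα ((0:ℝ),(0:ℝ),(1:ℝ))).differentiable (by simp)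
  have dφ' := hφ.differentiable (by simp)
  -- pointwise values
  have hc1 : Real.cos (φ p) * fderiv ℝ ρ p (1,0,0) + Real.sin (φ p) * fderiv ℝ ρ p (0,1,0)
      = 1 := hρs p
  have hc2 : Real.cos (φ p) * fderiv ℝ α p (1,0,0) + Real.sin (φ p) * fderiv ℝ α p (0,1,0)
      = 0 := hαs p
  have hc3 : -Real.sin (φ p) * fderiv ℝ α p (1,0,0) + Real.cos (φ p) * fderiv ℝ α p (0,1,0)
      = M (ρ p, α p) := hαn p
  have hMv : M (ρ p, α p) ≠ 0 := hMne p
  -- constancy equations differentiated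
  have hfunρ : (fun q => Real.cos (φ q) * fderiv ℝ ρ q (1,0,0)
      + Real.sin (φ q) * fderiv ℝ ρ q (0,1,0)) = (fun _ => (1:ℝ)) := funext hρs
  have hfunα : (fun q => Real.cos (φ q) * fderiv ℝ α q (1,0,0)
      + Real.sin (φ q) * fderiv ℝ α q (0,1,0)) = (fun _ => (0:ℝ)) := funext hαs
  have hfunN : (fun q => -Real.sin (φ q) * fderiv ℝ α q (1,0,0)
      + Real.cos (φ q) * fderiv ℝ α q (0,1,0)) = (fun q => M (ρ q, α q)) := funext hαn
  have hR : ∀ u, Real.cos (φ p) * fderiv ℝ (fun q => fderiv ℝ ρ q (1,0,0)) p u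
      + Real.sin (φ p) * fderiv ℝ (fun q => fderiv ℝ ρ q (0,1,0)) p u
      + fderiv ℝ φ p u * (-Real.sin (φ p) * fderiv ℝ ρ p (1,0,0)
          + Real.cos (φ p) * fderiv ℝ ρ p (0,1,0)) = 0 := by
    intro u
    rw [← fDs hφ hρ p u, hfunρ]
    simp
  have hA : ∀ u, Real.cos (φ p) * fderiv ℝ (fun q => fderiv ℝ α q (1,0,0)) p u
      + Real.sin (φ p) * fderiv ℝ (fun q => fderiv ℝ α q (0,1,0)) p u
      + fderiv ℝ φ p u * (-Real.sin (φ p) * fderiv ℝ α p (1,0,0)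
          + Real.cos (φ p) * fderiv ℝ α p (0,1,0)) = 0 := by
    intro u
    rw [← fDs hφ hα p u, hfunα]
    simp
  have hN : ∀ u, -Real.sin (φ p) * fderiv ℝ (fun q => fderiv ℝ α q (1,0,0)) p u
      + Real.cos (φ p) * fderiv ℝ (fun q => fderiv ℝ α q (0,1,0)) p u
      - fderiv ℝ φ p u * (Real.cos (φ p) * fderiv ℝ α p (1,0,0)
          + Real.sin (φ p) * fderiv ℝ α p (0,1,0))
      = fderiv ℝ M (ρ p, α p) (1,0) * fderiv ℝ ρ p u
        + fderiv ℝ M (ρ p, α p) (0,1) * fderiv ℝ α p u := by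
    intro u
    rw [← fDn hφ hα p u, hfunN]
    exact fMcomp hM hρ hα p u
  -- symmetry of second derivatives
  have sρxy := second_symm_s12 hρ p ((1:ℝ),(0:ℝ),(0:ℝ)) ((0:ℝ),(1:ℝ),(0:ℝ))
  have sρtx := second_symm_s12 hρ p ((1:ℝ),(0:ℝ),(0:ℝ)) ((0:ℝ),(0:ℝ),(1:ℝ))
  have sρty := second_symm_s12 hρ p ((0:ℝ),(1:ℝ),(0:ℝ)) ((0:ℝ),(0:ℝ),(1:ℝ))
  have sαxy := second_symm_s12 hα p ((1:ℝ),(0:ℝ),(0:ℝ)) ((0:ℝ),(1:ℝ),(0:ℝ))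
  have sαtx := second_symm_s12 hα p ((1:ℝ),(0:ℝ),(0:ℝ)) ((0:ℝ),(0:ℝ),(1:ℝ))
  have sαty := second_symm_s12 hα p ((0:ℝ),(1:ℝ),(0:ℝ)) ((0:ℝ),(0:ℝ),(1:ℝ))
  -- the R equations in key-shape
  have Rx' : Real.cos (φ p) * fderiv ℝ (fun q => fderiv ℝ ρ q (1,0,0)) p (1,0,0)
      + Real.sin (φ p) * fderiv ℝ (fun q => fderiv ℝ ρ q (0,1,0)) p (1,0,0)
      = -(fderiv ℝ φ p (1,0,0) * (-Real.sin (φ p) * fderiv ℝ ρ p (1,0,0)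
          + Real.cos (φ p) * fderiv ℝ ρ p (0,1,0))) := by
    linear_combination hR (1,0,0)
  have Ry' : Real.cos (φ p) * fderiv ℝ (fun q => fderiv ℝ ρ q (0,1,0)) p (1,0,0)
      + Real.sin (φ p) * fderiv ℝ (fun q => fderiv ℝ ρ q (0,1,0)) p (0,1,0)
      = -(fderiv ℝ φ p (0,1,0) * (-Real.sin (φ p) * fderiv ℝ ρ p (1,0,0)
          + Real.cos (φ p) * fderiv ℝ ρ p (0,1,0))) := by
    have h := hR (0,1,0)
    rw [sρxy] at h
    linear_combination h
  have Rt' : Real.cos (φ p) * fderiv ℝ (fun q => fderiv ℝ ρ q (0,0,1)) p (1,0,0)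
      + Real.sin (φ p) * fderiv ℝ (fun q => fderiv ℝ ρ q (0,0,1)) p (0,1,0)
      = -(fderiv ℝ φ p (0,0,1) * (-Real.sin (φ p) * fderiv ℝ ρ p (1,0,0)
          + Real.cos (φ p) * fderiv ℝ ρ p (0,1,0))) := by
    have h := hR (0,0,1)
    rw [sρtx, sρty] at h
    linear_combination h
  -- the A equations in key-shape
  have Ax' : Real.cos (φ p) * fderiv ℝ (fun q => fderiv ℝ α q (1,0,0)) p (1,0,0)
      + Real.sin (φ p) * fderiv ℝ (fun q => fderiv ℝ α q (0,1,0)) p (1,0,0)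
      = -(fderiv ℝ φ p (1,0,0) * M (ρ p, α p)) := by
    have h := hA (1,0,0)
    rw [hc3] at h
    linear_combination h
  have Ay' : Real.cos (φ p) * fderiv ℝ (fun q => fderiv ℝ α q (0,1,0)) p (1,0,0)
      + Real.sin (φ p) * fderiv ℝ (fun q => fderiv ℝ α q (0,1,0)) p (0,1,0)
      = -(fderiv ℝ φ p (0,1,0) * M (ρ p, α p)) := by
    have h := hA (0,1,0)
    rw [sαxy, hc3] at h
    linear_combination h
  have At' : Real.cos (φ p) * fderiv ℝ (fun q => fderiv ℝ α q (0,0,1)) p (1,0,0)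
      + Real.sin (φ p) * fderiv ℝ (fun q => fderiv ℝ α q (0,0,1)) p (0,1,0)
      = -(fderiv ℝ φ p (0,0,1) * M (ρ p, α p)) := by
    have h := hA (0,0,1)
    rw [sαtx, sαty, hc3] at h
    linear_combination h
  -- the N equations in key-shape
  have Nx' : -Real.sin (φ p) * fderiv ℝ (fun q => fderiv ℝ α q (1,0,0)) p (1,0,0)
      + Real.cos (φ p) * fderiv ℝ (fun q => fderiv ℝ α q (0,1,0)) p (1,0,0)
      = fderiv ℝ M (ρ p, α p) (1,0) * fderiv ℝ ρ p (1,0,0)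
        + fderiv ℝ M (ρ p, α p) (0,1) * fderiv ℝ α p (1,0,0) := by
    have h := hN (1,0,0)
    rw [hc2] at h
    linear_combination h
  have Ny' : -Real.sin (φ p) * fderiv ℝ (fun q => fderiv ℝ α q (0,1,0)) p (1,0,0)
      + Real.cos (φ p) * fderiv ℝ (fun q => fderiv ℝ α q (0,1,0)) p (0,1,0)
      = fderiv ℝ M (ρ p, α p) (1,0) * fderiv ℝ ρ p (0,1,0)
        + fderiv ℝ M (ρ p, α p) (0,1) * fderiv ℝ α p (0,1,0) := by
    have h := hN (0,1,0)
    rw [sαxy, hc2] at h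
    linear_combination h
  have Nt' : -Real.sin (φ p) * fderiv ℝ (fun q => fderiv ℝ α q (0,0,1)) p (1,0,0)
      + Real.cos (φ p) * fderiv ℝ (fun q => fderiv ℝ α q (0,0,1)) p (0,1,0)
      = fderiv ℝ M (ρ p, α p) (1,0) * fderiv ℝ ρ p (0,0,1)
        + fderiv ℝ M (ρ p, α p) (0,1) * fderiv ℝ α p (0,0,1) := by
    have h := hN (0,0,1)
    rw [sαtx, sαty, hc2] at h
    linear_combination h
  -- derivative of w
  have hwfun : w = fun q => -(fderiv ℝ α q (0,0,1) * (M (ρ q, α q))⁻¹) := by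
    rw [hwdef]
    funext q
    rw [show Dn φ α q = M (ρ q, α q) from hαn q, div_eq_mul_inv]
    rfl
  have hnum : HasFDerivAt (fun q => fderiv ℝ α q ((0:ℝ),(0:ℝ),(1:ℝ)))
      (fderiv ℝ (fun q => fderiv ℝ α q ((0:ℝ),(0:ℝ),(1:ℝ))) p) p := (dTα p).hasFDerivAt
  have dMcomp : Differentiable ℝ (fun q => M (ρ q, α q)) :=
    (hM.comp (hρ.prodMk hα)).differentiable (by simp)
  have hinv : HasFDerivAt (fun q => (M (ρ q, α q))⁻¹)
      ((-(M (ρ p, α p) ^ 2)⁻¹) • fderiv ℝ (fun q => M (ρ q, α q)) p) p :=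
    (hasDerivAt_inv hMv).comp_hasFDerivAt p (dMcomp p).hasFDerivAt
  have hwHas := (hnum.mul hinv).neg
  have dw : DifferentiableAt ℝ w p := by
    rw [hwfun]; exact hwHas.differentiableAt
  have hfw : fderiv ℝ w p
      = -(fderiv ℝ α p (0,0,1) • ((-(M (ρ p, α p) ^ 2)⁻¹) • fderiv ℝ (fun q => M (ρ q, α q)) p)
        + (M (ρ p, α p))⁻¹ • fderiv ℝ (fun q => fderiv ℝ α q (0,0,1)) p) := by
    rw [hwfun]; exact hwHas.fderiv
  have hwu : ∀ u, fderiv ℝ w p u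
      = -(fderiv ℝ α p (0,0,1) * ((-(M (ρ p, α p) ^ 2)⁻¹)
            * (fderiv ℝ M (ρ p, α p) (1,0) * fderiv ℝ ρ p u
              + fderiv ℝ M (ρ p, α p) (0,1) * fderiv ℝ α p u))
        + (M (ρ p, α p))⁻¹ * fderiv ℝ (fun q => fderiv ℝ α q (0,0,1)) p u) := by
    intro u
    rw [hfw, ← fMcomp hM hρ hα p u]
    simp only [ContinuousLinearMap.neg_apply, ContinuousLinearMap.add_apply,
      ContinuousLinearMap.smul_apply, smul_eq_mul]
  have hwxk : M (ρ p, α p) ^ 2 * fderiv ℝ w p (1,0,0)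
      = fderiv ℝ α p (0,0,1) * (fderiv ℝ M (ρ p, α p) (1,0) * fderiv ℝ ρ p (1,0,0)
          + fderiv ℝ M (ρ p, α p) (0,1) * fderiv ℝ α p (1,0,0))
        - M (ρ p, α p) * fderiv ℝ (fun q => fderiv ℝ α q (0,0,1)) p (1,0,0) := by
    rw [hwu (1,0,0)]
    field_simp
    ring
  have hwyk : M (ρ p, α p) ^ 2 * fderiv ℝ w p (0,1,0)
      = fderiv ℝ α p (0,0,1) * (fderiv ℝ M (ρ p, α p) (1,0) * fderiv ℝ ρ p (0,1,0)
          + fderiv ℝ M (ρ p, α p) (0,1) * fderiv ℝ α p (0,1,0))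
        - M (ρ p, α p) * fderiv ℝ (fun q => fderiv ℝ α q (0,0,1)) p (0,1,0) := by
    rw [hwu (0,1,0)]
    field_simp
    ring
  have hwk : M (ρ p, α p) * w p = -fderiv ℝ α p (0,0,1) := by
    rw [hwfun]
    field_simp
  -- derivative of v
  have dDnρ : Differentiable ℝ (fun q => -Real.sin (φ q) * fderiv ℝ ρ q (1,0,0)
      + Real.cos (φ q) * fderiv ℝ ρ q (0,1,0)) :=
    ((dφ'.sin.neg.mul dXρ).add (dφ'.cos.mul dYρ))
  have hvfun : v = fun q => -(w q * (-Real.sin (φ q) * fderiv ℝ ρ q (1,0,0)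
      + Real.cos (φ q) * fderiv ℝ ρ q (0,1,0))) - fderiv ℝ ρ q (0,0,1) := hvdef
  have hfv : ∀ u, fderiv ℝ v p u
      = -(w p * fderiv ℝ (fun q => -Real.sin (φ q) * fderiv ℝ ρ q (1,0,0)
            + Real.cos (φ q) * fderiv ℝ ρ q (0,1,0)) p u
          + (-Real.sin (φ p) * fderiv ℝ ρ p (1,0,0)
              + Real.cos (φ p) * fderiv ℝ ρ p (0,1,0)) * fderiv ℝ w p u)
        - fderiv ℝ (fun q => fderiv ℝ ρ q (0,0,1)) p u := by
    intro u
    rw [hvfun]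
    rw [fderiv_fun_sub (f := fun q => -(w q * (-Real.sin (φ q) * fderiv ℝ ρ q (1,0,0)
        + Real.cos (φ q) * fderiv ℝ ρ q (0,1,0)))) ((dw.mul (dDnρ p)).neg) (dTρ p)]
    rw [show (fun q => -(w q * (-Real.sin (φ q) * fderiv ℝ ρ q (1,0,0)
        + Real.cos (φ q) * fderiv ℝ ρ q (0,1,0))))
      = (fun q => -((fun q' => w q' * (-Real.sin (φ q') * fderiv ℝ ρ q' (1,0,0)
        + Real.cos (φ q') * fderiv ℝ ρ q' (0,1,0))) q)) from rfl, fderiv_fun_neg,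
      fderiv_fun_mul dw (dDnρ p)]
    simp only [ContinuousLinearMap.coe_sub', Pi.sub_apply, ContinuousLinearMap.neg_apply,
      ContinuousLinearMap.add_apply, ContinuousLinearMap.smul_apply, smul_eq_mul]
  have hvxk : fderiv ℝ v p (1,0,0)
      = -(fderiv ℝ w p (1,0,0) * (-Real.sin (φ p) * fderiv ℝ ρ p (1,0,0)
            + Real.cos (φ p) * fderiv ℝ ρ p (0,1,0))
          + w p * (-Real.sin (φ p) * fderiv ℝ (fun q => fderiv ℝ ρ q (1,0,0)) p (1,0,0)
            + Real.cos (φ p) * fderiv ℝ (fun q => fderiv ℝ ρ q (0,1,0)) p (1,0,0)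
            - fderiv ℝ φ p (1,0,0) * (Real.cos (φ p) * fderiv ℝ ρ p (1,0,0)
                + Real.sin (φ p) * fderiv ℝ ρ p (0,1,0))))
        - fderiv ℝ (fun q => fderiv ℝ ρ q (0,0,1)) p (1,0,0) := by
    rw [hfv (1,0,0), fDn hφ hρ p (1,0,0)]
    ring
  have hvyk : fderiv ℝ v p (0,1,0)
      = -(fderiv ℝ w p (0,1,0) * (-Real.sin (φ p) * fderiv ℝ ρ p (1,0,0)
            + Real.cos (φ p) * fderiv ℝ ρ p (0,1,0))
          + w p * (-Real.sin (φ p) * fderiv ℝ (fun q => fderiv ℝ ρ q (0,1,0)) p (1,0,0)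
            + Real.cos (φ p) * fderiv ℝ (fun q => fderiv ℝ ρ q (0,1,0)) p (0,1,0)
            - fderiv ℝ φ p (0,1,0) * (Real.cos (φ p) * fderiv ℝ ρ p (1,0,0)
                + Real.sin (φ p) * fderiv ℝ ρ p (0,1,0))))
        - fderiv ℝ (fun q => fderiv ℝ ρ q (0,0,1)) p (0,1,0) := by
    rw [hfv (0,1,0), fDn hφ hρ p (0,1,0), sρxy]
    ring
  have hvk : v p = -(w p * (-Real.sin (φ p) * fderiv ℝ ρ p (1,0,0)
      + Real.cos (φ p) * fderiv ℝ ρ p (0,1,0))) - fderiv ℝ ρ p (0,0,1) := by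
    rw [hvfun]
  obtain ⟨g1, g2, g3⟩ := key (Real.cos (φ p)) (Real.sin (φ p))
    (fderiv ℝ φ p (1,0,0)) (fderiv ℝ φ p (0,1,0)) (fderiv ℝ φ p (0,0,1))
    (fderiv ℝ ρ p (1,0,0)) (fderiv ℝ ρ p (0,1,0)) (fderiv ℝ ρ p (0,0,1))
    (fderiv ℝ α p (1,0,0)) (fderiv ℝ α p (0,1,0)) (fderiv ℝ α p (0,0,1))
    (M (ρ p, α p)) (fderiv ℝ M (ρ p, α p) (1,0)) (fderiv ℝ M (ρ p, α p) (0,1))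
    (fderiv ℝ (fun q => fderiv ℝ ρ q (1,0,0)) p (1,0,0))
    (fderiv ℝ (fun q => fderiv ℝ ρ q (0,1,0)) p (1,0,0))
    (fderiv ℝ (fun q => fderiv ℝ ρ q (0,1,0)) p (0,1,0))
    (fderiv ℝ (fun q => fderiv ℝ ρ q (0,0,1)) p (1,0,0))
    (fderiv ℝ (fun q => fderiv ℝ ρ q (0,0,1)) p (0,1,0))
    (fderiv ℝ (fun q => fderiv ℝ α q (1,0,0)) p (1,0,0))
    (fderiv ℝ (fun q => fderiv ℝ α q (0,1,0)) p (1,0,0))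
    (fderiv ℝ (fun q => fderiv ℝ α q (0,1,0)) p (0,1,0))
    (fderiv ℝ (fun q => fderiv ℝ α q (0,0,1)) p (1,0,0))
    (fderiv ℝ (fun q => fderiv ℝ α q (0,0,1)) p (0,1,0))
    (w p) (fderiv ℝ w p (1,0,0)) (fderiv ℝ w p (0,1,0))
    (v p) (fderiv ℝ v p (1,0,0)) (fderiv ℝ v p (0,1,0))
    hMv hc1 hc2 hc3 Rx' Ry' Rt' Ax' Ay' At' Nx' Ny' Nt' hwk hwxk hwyk hvk hvxk hvyk
  exact ⟨g1, g2, g3⟩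

end
end
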